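/- arXiv:1903.12367 — 2 statements merged into one kernel-verified Lean document; each statement's English description precedes it below -/
import Mathlib

section
/- For every linear isometry f of (ℝ⁴, η), the induced algebra automorphism f̂ of Cl(η) preserves the extended metric: ĝ(f̂(ψ), f̂(φ)) = ĝ(ψ, φ) for all ψ, φ ∈ Cl(η). -/
noncomputable section

open CliffordAlgebra

/-- Minkowski space ℝ⁴. -/
abbrev V4 : Type := Fin 4 → ℝ

/-- The Minkowski quadratic form η(x) = −x₀² + x₁² + x₂² + x₃². -/
def η : QuadraticForm ℝ V4 := QuadraticMap.weightedSumSquares ℝ ![(-1 : ℝ), 1, 1, 1]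

/-- The Clifford algebra Cl(η). -/
abbrev Cl : Type := CliffordAlgebra η

/-- Standard basis vectors e₀, e₁, e₂, e₃ of ℝ⁴. -/
def e (i : Fin 4) : V4 := Pi.single i 1

/-- The polar bilinear form B of η : B(v,w) = (η(v+w) − η(v) − η(w))/2. -/
def Bη (v w : V4) : ℝ := (η (v + w) - η v - η w) / 2

/-- γ_v : left multiplication by ι(v). -/
def γ (v : V4) : Module.End ℝ Cl := LinearMap.mulLeft ℝ (ι η v)

/-- R_c : right multiplication by c. -/
def Rc (c : Cl) : Module.End ℝ Cl := LinearMap.mulRight ℝ c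

/-- The basis element e_I = ι(e_{i₁})⋯ι(e_{i_k}) for I = {i₁ < ⋯ < i_k}. -/
def eI (I : Finset (Fin 4)) : Cl := ((I.sort (· ≤ ·)).map (fun i => ι η (e i))).prod

/-- Clifford conjugation: reversal composed with the grade involution. -/
def cconj : Cl →ₗ[ℝ] Cl := reverse ∘ₗ involute.toLinearMap

/-- The extended metric ĝ on Cl(η), relative to a coefficient functional π₀. -/
def ghat (π₀ : Cl →ₗ[ℝ] ℝ) (ψ φ : Cl) : ℝ := -(1/2 : ℝ) * π₀ (cconj ψ * φ + cconj φ * ψ)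

/-- The algebra automorphism f̂ of Cl(η) induced by a linear isometry f of (ℝ⁴,η). -/
def hatAut (f : V4 ≃ₗ[ℝ] V4) (hf : ∀ v, η (f v) = η v) : Cl →ₐ[ℝ] Cl :=
  CliffordAlgebra.lift η ⟨(ι η) ∘ₗ (f : V4 →ₗ[ℝ] V4), fun v => by
    simp only [LinearMap.comp_apply, LinearEquiv.coe_coe, ι_sq_scalar, hf]⟩

lemma isometry_symm (f : V4 ≃ₗ[ℝ] V4) (hf : ∀ v, η (f v) = η v) :
    ∀ v, η (f.symm v) = η v := fun v => by
  have h := hf (f.symm v)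
  rw [f.apply_symm_apply] at h
  exact h.symm

/-- The action of a linear isometry f on a quadruple θ of endomorphisms of Cl(η):
(f·θ)_α = Σ_β c_{βα} • (f̂ ∘ θ_β ∘ f̂⁻¹), where f⁻¹(e_α) = Σ_β c_{βα} e_β. -/
def act (f : V4 ≃ₗ[ℝ] V4) (hf : ∀ v, η (f v) = η v)
    (θ : Fin 4 → Module.End ℝ Cl) : Fin 4 → Module.End ℝ Cl :=
  fun α => ∑ β : Fin 4, f.symm (e α) β •
    ((hatAut f hf).toLinearMap ∘ₗ θ β ∘ₗ (hatAut f.symm (isometry_symm f hf)).toLinearMap)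

/-!
Since `f̂` commutes with Clifford conjugation, it suffices that the scalar part `π₀` is
`f̂`-invariant. This holds because `16 • π₀ x` is the trace of left multiplication by `x`:
every `e_I` with `I ≠ ∅` anticommutes with an invertible generator `ι (e j)` (take `j ∈ I` if
`|I|` is even and `j ∉ I` if `|I|` is odd), so left multiplication by `e_I` is traceless; and
the trace is invariant under conjugation by the algebra automorphism `f̂`.
-/

namespace CliffordAlgebra

variable {R M : Type*} [CommRing R] [AddCommGroup M] [Module R M] {Q : QuadraticForm R M}

theorem ι_mul_prod_map_ι_of_isOrtho {κ : Type*} (v : M) (g : κ → M) (l : List κ)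
    (h : ∀ i ∈ l, Q.IsOrtho v (g i)) :
    ι Q v * (l.map fun i => ι Q (g i)).prod =
      (-1 : ℤ) ^ l.length • ((l.map fun i => ι Q (g i)).prod * ι Q v) := by
  induction l with
  | nil => simp
  | cons i l ih =>
    simp only [List.map_cons, List.prod_cons, List.length_cons, pow_succ, mul_neg_one, neg_smul]
    rw [ι_mul_ι_mul_of_isOrtho _ (h i List.mem_cons_self),
      ih fun j hj => h j (List.mem_cons_of_mem i hj), mul_smul_comm, mul_assoc]

variable {N : Type*} [AddCommGroup N] [Module R N] {Q' : QuadraticForm R N}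

theorem map_involute (f : Q →qᵢ Q') (x : CliffordAlgebra Q) :
    map f (involute x) = involute (map f x) := by
  have : (map f).comp involute = involute.comp (map f) := by
    ext v
    simp
  exact congr($this x)

theorem map_reverse (f : Q →qᵢ Q') (x : CliffordAlgebra Q) :
    map f (reverse x) = reverse (map f x) := by
  induction x using CliffordAlgebra.induction with
  | algebraMap r => simp
  | ι v => simp
  | mul a c ha hc => simp only [reverse.map_mul, map_mul, ha, hc]
  | add a c ha hc => simp only [map_add, ha, hc]

end CliffordAlgebra

section AlgebraTrace

open LinearMap

variable {K A : Type*} [Field K] [Ring A] [Algebra K A]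

theorem trace_mulLeft_algEquiv (α : A ≃ₐ[K] A) (x : A) :
    trace K A (mulLeft K (α x)) = trace K A (mulLeft K x) := by
  have : mulLeft K (α x) = α.toLinearEquiv.conj (mulLeft K x) := by
    ext y
    simp [LinearEquiv.conj_apply]
  rw [this, trace_conj']

theorem trace_mulLeft_mul_comm [FiniteDimensional K A] (a b : A) :
    trace K A (mulLeft K (a * b)) = trace K A (mulLeft K (b * a)) := by
  rw [mulLeft_mul, mulLeft_mul, ← Module.End.mul_eq_comp, ← Module.End.mul_eq_comp,
    trace_mul_comm]

theorem trace_mulLeft_eq_zero_of_anticomm [FiniteDimensional K A] [CharZero K] {u x : A}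
    (hu : IsUnit u) (h : u * x = -(x * u)) : trace K A (mulLeft K x) = 0 := by
  obtain ⟨u, rfl⟩ := hu
  have hx : ↑u⁻¹ * (x * u) = -x := by
    rw [← neg_eq_iff_eq_neg.mpr h, mul_neg, Units.inv_mul_cancel_left]
  have hneg : mulLeft K (-x) = -mulLeft K x := map_neg (LinearMap.mul K A) x
  have : -trace K A (mulLeft K x) = trace K A (mulLeft K x) := by
    rw [← map_neg, ← hneg, ← hx, trace_mulLeft_mul_comm, mul_assoc, Units.mul_inv, mul_one]
  exact CharZero.neg_eq_self_iff.mp this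

theorem trace_mulLeft_eq_card_mul_coord {κ : Type*} [Fintype κ] (b : Module.Basis κ K A)
    {i₀ : κ} (h₁ : b i₀ = 1) (h₀ : ∀ i ≠ i₀, trace K A (mulLeft K (b i)) = 0)
    (x : A) :
    trace K A (mulLeft K x) = Fintype.card κ * b.coord i₀ x := by
  have := Module.Finite.of_basis b
  have key : trace K A ∘ₗ LinearMap.mul K A = (Fintype.card κ : K) • b.coord i₀ := by
    refine b.ext fun i => ?_
    change trace K A (mulLeft K (b i)) = Fintype.card κ * b.coord i₀ (b i)
    obtain rfl | hi := eq_or_ne i i₀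
    · rw [Module.Basis.coord_apply, Module.Basis.repr_self, h₁, mulLeft_one, trace_id,
        Module.finrank_eq_card_basis b]
      simp
    · simp [h₀ i hi, hi]
  exact congr($key x)

theorem coord_algEquiv_apply [CharZero K] {κ : Type*} [Fintype κ] (b : Module.Basis κ K A)
    {i₀ : κ} (h₁ : b i₀ = 1) (h₀ : ∀ i ≠ i₀, trace K A (mulLeft K (b i)) = 0)
    (α : A ≃ₐ[K] A) (x : A) :
    b.coord i₀ (α x) = b.coord i₀ x := by
  have : Nonempty κ := ⟨i₀⟩
  have hcard : (Fintype.card κ : K) ≠ 0 := Nat.cast_ne_zero.mpr Fintype.card_ne_zero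
  have := trace_mulLeft_algEquiv α x
  rwa [trace_mulLeft_eq_card_mul_coord b h₁ h₀, trace_mulLeft_eq_card_mul_coord b h₁ h₀,
    mul_right_inj' hcard] at this

end AlgebraTrace

namespace QuadraticMap

variable {R κ : Type*} [CommRing R] [Fintype κ] [DecidableEq κ] (w : κ → R)

theorem weightedSumSquares_single (i : κ) : weightedSumSquares R w (Pi.single i 1) = w i := by
  simp [weightedSumSquares_apply, Pi.single_apply]

theorem isOrtho_weightedSumSquares_single {i j : κ} (hij : i ≠ j) :
    (weightedSumSquares R w).IsOrtho (Pi.single i 1) (Pi.single j 1) := by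
  rw [isOrtho_def]
  simp only [weightedSumSquares_apply, ← Finset.sum_add_distrib]
  refine Finset.sum_congr rfl fun k _ => ?_
  by_cases hki : k = i <;> by_cases hkj : k = j <;> simp_all

end QuadraticMap

theorem η_e (i : Fin 4) : η (e i) = ![(-1 : ℝ), 1, 1, 1] i :=
  QuadraticMap.weightedSumSquares_single _ i

theorem isUnit_η_e (i : Fin 4) : IsUnit (η (e i)) := by
  rw [η_e]
  fin_cases i <;> norm_num

theorem isOrtho_e {i j : Fin 4} (hij : i ≠ j) : η.IsOrtho (e i) (e j) :=
  QuadraticMap.isOrtho_weightedSumSquares_single _ hij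

theorem eI_empty : eI ∅ = 1 := by
  simp [eI]

theorem exists_isUnit_anticomm_eI {I : Finset (Fin 4)} (hI : I ≠ ∅) :
    ∃ u : Cl, IsUnit u ∧ u * eI I = -(eI I * u) := by
  obtain ⟨k, hk⟩ | hodd := Nat.even_or_odd I.card
  · obtain ⟨i, l, hl⟩ := List.exists_cons_of_ne_nil (l := I.sort (· ≤ ·)) fun h => hI <| by
      simpa using congr(List.length $h)
    have hortho : ∀ j ∈ l, η.IsOrtho (e i) (e j) := fun j hj =>
      isOrtho_e fun hij => (List.nodup_cons.mp (hl ▸ I.sort_nodup (· ≤ ·))).1 (hij ▸ hj)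
    have hlen : Odd l.length := by
      have := I.length_sort (· ≤ ·)
      rw [hl, List.length_cons] at this
      exact ⟨k - 1, by omega⟩
    refine ⟨ι η (e i), isUnit_ι_of_isUnit η (isUnit_η_e i), ?_⟩
    have hP := ι_mul_prod_map_ι_of_isOrtho (e i) e l hortho
    rw [hlen.neg_one_pow, neg_one_smul] at hP
    simp only [eI, hl, List.map_cons, List.prod_cons]
    rw [mul_assoc _ _ (ι η (e i)), ← neg_eq_iff_eq_neg.mpr hP, mul_neg, neg_neg]
  · obtain ⟨j, hj⟩ : ∃ j, j ∉ I := by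
      by_contra! h
      rw [Finset.eq_univ_of_forall h] at hodd
      simp only [Finset.card_univ, Fintype.card_fin] at hodd
      exact Nat.not_odd_iff_even.mpr (by decide) hodd
    refine ⟨ι η (e j), isUnit_ι_of_isUnit η (isUnit_η_e j), ?_⟩
    have hortho : ∀ i ∈ I.sort (· ≤ ·), η.IsOrtho (e j) (e i) := fun i hi =>
      isOrtho_e fun hji => hj (hji ▸ (I.mem_sort _).mp hi)
    rw [eI, ι_mul_prod_map_ι_of_isOrtho (e j) e _ hortho, I.length_sort, hodd.neg_one_pow,
      neg_one_smul]

theorem trace_mulLeft_eI [FiniteDimensional ℝ Cl] {I : Finset (Fin 4)} (hI : I ≠ ∅) :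
    LinearMap.trace ℝ Cl (LinearMap.mulLeft ℝ (eI I)) = 0 := by
  obtain ⟨u, hu, hanti⟩ := exists_isUnit_anticomm_eI hI
  exact trace_mulLeft_eq_zero_of_anticomm hu hanti

theorem cconj_map (f : η →qᵢ η) (x : Cl) : cconj (map f x) = map f (cconj x) := by
  simp [cconj, map_involute, map_reverse]

theorem hatAut_apply (f : V4 ≃ₗ[ℝ] V4) (hf : ∀ v, η (f v) = η v) (x : Cl) :
    hatAut f hf x = equivOfIsometry ⟨f, hf⟩ x := by
  have : hatAut f hf = (equivOfIsometry ⟨f, hf⟩ : Cl →ₐ[ℝ] Cl) := by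
    refine CliffordAlgebra.hom_ext (LinearMap.ext fun v => ?_)
    simp only [hatAut, AlgHom.toLinearMap_apply, LinearMap.comp_apply, lift_ι_apply,
      AlgEquiv.coe_toAlgHom, equivOfIsometry_apply, map_apply_ι]
    rfl
  exact congr($this x)

theorem ghat_algEquiv {π₀ : Cl →ₗ[ℝ] ℝ} {σ : Cl ≃ₐ[ℝ] Cl}
    (hπ : ∀ x, π₀ (σ x) = π₀ x) (hσ : ∀ x, cconj (σ x) = σ (cconj x)) (ψ φ : Cl) :
    ghat π₀ (σ ψ) (σ φ) = ghat π₀ ψ φ := by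
  simp only [ghat, hσ, ← map_mul, ← map_add, hπ]

/-- the induced automorphism f̂ of any linear isometry f preserves ĝ. -/
theorem stmt8 (b : Module.Basis (Finset (Fin 4)) ℝ Cl) (hb : ∀ I, b I = eI I)
    (f : V4 ≃ₗ[ℝ] V4) (hf : ∀ v, η (f v) = η v) (ψ φ : Cl) :
    ghat (b.coord ∅) (hatAut f hf ψ) (hatAut f hf φ) = ghat (b.coord ∅) ψ φ := by
  have := Module.Finite.of_basis b
  have hπ := coord_algEquiv_apply b ((hb ∅).trans eI_empty)
    (fun I hI => (hb I).symm ▸ trace_mulLeft_eI hI) (equivOfIsometry ⟨f, hf⟩)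
  rw [hatAut_apply, hatAut_apply]
  exact ghat_algEquiv hπ (cconj_map _) ψ φ
end
end

section
/- The quadruple u defined by u_α = R_{ι(e_α)} (α = 0,1,2,3) is a force tensor, and it is fixed by the action of every linear isometry f of (ℝ⁴, η): f·u = u. -/
noncomputable section

open CliffordAlgebra

/-- A force tensor: a quadruple of endomorphisms of Cl(η), each commuting with all the
gamma matrices and anti-self-adjoint with respect to ĝ. -/
def IsForceTensor (π₀ : Cl →ₗ[ℝ] ℝ) (θ : Fin 4 → Module.End ℝ Cl) : Prop :=
  ∀ α : Fin 4, (∀ v : V4, θ α ∘ₗ γ v = γ v ∘ₗ θ α) ∧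
    ∀ ψ φ : Cl, ghat π₀ (θ α ψ) φ + ghat π₀ ψ (θ α φ) = 0

/-! Conjugation by the unit `ι(e i)` is the algebra automorphism induced by the isometry that
flips the sign of every coordinate except the `i`-th one. Such a diagonal isometry scales each
basis monomial `e_J` by `±1`, so it preserves the scalar coefficient `π₀`; hence
`π₀ (x * ι(e i)) = π₀ (ι(e i) * x)`. Together with `conj (ι v) = -ι v` this makes right
multiplication by `ι(e i)` skew-adjoint for `ĝ`. Invariance under `f` is linearity of `ι ∘ f`:
the coefficients `c_{βα}` recombine `ι(f e_β)` into `ι(f (f⁻¹ e_α)) = ι(e_α)`. -/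

theorem QuadraticMap.isOrtho_weightedSumSquares_single_s11 {R ι : Type*} [CommRing R] [Fintype ι]
    [DecidableEq ι] (w : ι → R) {i j : ι} (h : i ≠ j) :
    (weightedSumSquares R w).IsOrtho (Pi.single i 1) (Pi.single j 1) := by
  rw [isOrtho_def]
  simp only [weightedSumSquares_apply, Pi.add_apply, Pi.single_apply, smul_eq_mul]
  rw [← Finset.sum_add_distrib]
  refine Finset.sum_congr rfl fun x _ => ?_
  split_ifs <;> simp_all

theorem List.prod_map_smul {R A ι : Type*} [CommMonoid R] [Monoid A] [MulAction R A]
    [IsScalarTower R A A] [SMulCommClass R A A] (l : List ι) (s : ι → R) (x : ι → A) :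
    (l.map fun j => s j • x j).prod = (l.map s).prod • (l.map x).prod := by
  induction l with
  | nil => simp
  | cons j l ih => simp [ih, smul_mul_smul_comm]

namespace CliffordAlgebra

variable {R M : Type*} [CommRing R] [AddCommGroup M] [Module R M] {Q : QuadraticForm R M}

theorem mul_eq_of_forall_mul_ι {σ : CliffordAlgebra Q →ₐ[R] CliffordAlgebra Q}
    {c : CliffordAlgebra Q} (h : ∀ m, c * ι Q m = σ (ι Q m) * c) (x : CliffordAlgebra Q) :
    c * x = σ x * c := by
  induction x using CliffordAlgebra.induction with
  | algebraMap r => rw [AlgHom.commutes, Algebra.commutes]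
  | ι m => exact h m
  | mul a b ha hb => rw [← mul_assoc, ha, mul_assoc, hb, map_mul, mul_assoc]
  | add a b ha hb => rw [mul_add, ha, hb, map_add, add_mul]

end CliffordAlgebra

@[simp]
theorem hatAut_ι (f : V4 ≃ₗ[ℝ] V4) (hf : ∀ v, η (f v) = η v) (v : V4) :
    hatAut f hf (ι η v) = ι η (f v) := by
  simp [hatAut]

theorem hatAut_apply_hatAut_symm (f : V4 ≃ₗ[ℝ] V4) (hf : ∀ v, η (f v) = η v) (x : Cl) :
    hatAut f hf (hatAut f.symm (isometry_symm f hf) x) = x := by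
  have : (hatAut f hf).comp (hatAut f.symm (isometry_symm f hf)) = AlgHom.id ℝ Cl :=
    CliffordAlgebra.hom_ext <| LinearMap.ext fun v => by simp
  exact AlgHom.congr_fun this x

theorem hatAut_eI_of_diag (f : V4 ≃ₗ[ℝ] V4) (hf : ∀ v, η (f v) = η v) (s : Fin 4 → ℝ)
    (hs : ∀ j, f (e j) = s j • e j) (J : Finset (Fin 4)) :
    hatAut f hf (eI J) = (∏ j ∈ J, s j) • eI J := by
  rw [eI, map_list_prod, List.map_map]
  simp only [Function.comp_def, hatAut_ι, hs, map_smul]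
  rw [List.prod_map_smul, ← List.prod_toFinset _ (Finset.sort_nodup _ _), Finset.sort_toFinset]

def signFlip (i : Fin 4) : V4 ≃ₗ[ℝ] V4 :=
  LinearEquiv.piCongrRight fun j => if j = i then LinearEquiv.refl ℝ ℝ else LinearEquiv.neg ℝ

theorem signFlip_apply (i : Fin 4) (v : V4) (j : Fin 4) :
    signFlip i v j = if j = i then v j else -v j := by
  by_cases h : j = i <;> simp [signFlip, h]

theorem signFlip_e (i j : Fin 4) : signFlip i (e j) = (if j = i then (1 : ℝ) else -1) • e j := by
  ext k
  by_cases hk : k = j <;> by_cases hj : j = i <;> simp_all [signFlip_apply, e]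

theorem η_signFlip (i : Fin 4) (v : V4) : η (signFlip i v) = η v := by
  simp only [η, QuadraticMap.weightedSumSquares_apply, signFlip_apply]
  refine Finset.sum_congr rfl fun j _ => ?_
  split_ifs <;> simp

theorem ι_e_mul_ι (i : Fin 4) (v : V4) :
    ι η (e i) * ι η v = ι η (signFlip i v) * ι η (e i) := by
  have : (LinearMap.mulLeft ℝ (ι η (e i))) ∘ₗ ι η =
      (LinearMap.mulRight ℝ (ι η (e i))) ∘ₗ ι η ∘ₗ (signFlip i : V4 →ₗ[ℝ] V4) := by
    refine (Pi.basisFun ℝ (Fin 4)).ext fun j => ?_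
    have hj : Pi.basisFun ℝ (Fin 4) j = e j := Pi.basisFun_apply ℝ (Fin 4) j
    simp only [LinearMap.comp_apply, LinearMap.mulLeft_apply, LinearMap.mulRight_apply,
      LinearEquiv.coe_coe, hj, signFlip_e]
    split_ifs with h
    · simp [h]
    · rw [ι_mul_ι_comm_of_isOrtho (QuadraticMap.isOrtho_weightedSumSquares_single_s11 _ (Ne.symm h))]
      simp [e]
  exact LinearMap.congr_fun this v

theorem cconj_mul_ι (x : Cl) (v : V4) : cconj (x * ι η v) = -(ι η v * cconj x) := by
  simp [cconj, reverse.map_mul, involute_ι, reverse_ι]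

theorem Rc_comp_γ (c : Cl) (v : V4) : Rc c ∘ₗ γ v = γ v ∘ₗ Rc c :=
  LinearMap.ext fun x => mul_assoc (ι η v) x c

theorem coord_empty_hatAut_of_diag (b : Module.Basis (Finset (Fin 4)) ℝ Cl)
    (hb : ∀ I, b I = eI I) (f : V4 ≃ₗ[ℝ] V4) (hf : ∀ v, η (f v) = η v) (s : Fin 4 → ℝ)
    (hs : ∀ j, f (e j) = s j • e j) (x : Cl) :
    b.coord ∅ (hatAut f hf x) = b.coord ∅ x := by
  have : b.coord ∅ ∘ₗ (hatAut f hf).toLinearMap = b.coord ∅ := by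
    refine b.ext fun J => ?_
    rw [LinearMap.comp_apply, AlgHom.toLinearMap_apply, hb, hatAut_eI_of_diag f hf s hs,
      map_smul, ← hb, Module.Basis.coord_apply, Module.Basis.repr_self, Finsupp.single_apply]
    split_ifs with h <;> simp [h]
  exact LinearMap.congr_fun this x

theorem coord_empty_mul_ι_e (b : Module.Basis (Finset (Fin 4)) ℝ Cl)
    (hb : ∀ I, b I = eI I) (i : Fin 4) (x : Cl) :
    b.coord ∅ (x * ι η (e i)) = b.coord ∅ (ι η (e i) * x) := by
  have hσ : ∀ v, ι η (e i) * ι η v = hatAut (signFlip i) (η_signFlip i) (ι η v) * ι η (e i) :=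
    fun v => by rw [hatAut_ι, ι_e_mul_ι]
  have hfix : hatAut (signFlip i) (η_signFlip i) (ι η (e i)) = ι η (e i) := by
    simp [signFlip_e]
  rw [mul_eq_of_forall_mul_ι hσ, ← hfix, ← map_mul, hfix,
    coord_empty_hatAut_of_diag b hb _ _ _ (signFlip_e i)]

theorem isForceTensor_Rc_ι_e (b : Module.Basis (Finset (Fin 4)) ℝ Cl) (hb : ∀ I, b I = eI I) :
    IsForceTensor (b.coord ∅) (fun α => Rc (ι η (e α))) := by
  refine fun α => ⟨Rc_comp_γ _, fun ψ φ => ?_⟩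
  have hψφ := coord_empty_mul_ι_e b hb α (cconj ψ * φ)
  have hφψ := coord_empty_mul_ι_e b hb α (cconj φ * ψ)
  simp only [ghat, Rc, LinearMap.mulRight_apply, cconj_mul_ι, map_add, neg_mul, map_neg,
    mul_assoc] at hψφ hφψ ⊢
  linarith

theorem act_Rc_ι_e (f : V4 ≃ₗ[ℝ] V4) (hf : ∀ v, η (f v) = η v) :
    act f hf (fun α => Rc (ι η (e α))) = fun α => Rc (ι η (e α)) := by
  funext α
  refine LinearMap.ext fun x => ?_
  have hexpand : ∑ β : Fin 4, f.symm (e α) β • e β = f.symm (e α) := by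
    simpa [e] using (Pi.basisFun ℝ (Fin 4)).sum_repr (f.symm (e α))
  simp only [act, LinearMap.sum_apply, LinearMap.smul_apply, LinearMap.comp_apply,
    AlgHom.toLinearMap_apply, Rc, LinearMap.mulRight_apply, map_mul, hatAut_apply_hatAut_symm,
    hatAut_ι, ← mul_smul_comm, ← Finset.mul_sum, ← map_smul, ← map_sum, hexpand,
    LinearEquiv.apply_symm_apply]

/-- u, with u_α = R_{ι(e_α)}, is a force tensor fixed by the action of
every linear isometry of (ℝ⁴,η). -/
theorem stmt11 (b : Module.Basis (Finset (Fin 4)) ℝ Cl) (hb : ∀ I, b I = eI I) :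
    IsForceTensor (b.coord ∅) (fun α => Rc (ι η (e α))) ∧
    ∀ (f : V4 ≃ₗ[ℝ] V4) (hf : ∀ v, η (f v) = η v),
      act f hf (fun α => Rc (ι η (e α))) = fun α => Rc (ι η (e α)) :=
  ⟨isForceTensor_Rc_ι_e b hb, act_Rc_ι_e⟩
end
end
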